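/- arXiv:2405.04616 — 3 statements merged into one kernel-verified Lean document; each statement's English description precedes it below -/
import Mathlib

section
/- Let 𝔘 be a Banach algebra such that 𝔘♯ is symmetrically pseudo-amenable, and X a Banach 𝔘-bimodule. Then every bounded central Jordan derivation from 𝔘 to X (i.e., with range in Z_𝔘(X)) is a derivation. -/
open Filter Topology

universe u

/-- A realization of the projective Banach-space tensor square `A ⊗̂ A` of a (non-unital)
Banach algebra `A`, together with the canonical bimodule operations `a•t`, `t•a`, the
"opposite" operations `a∘t`, `t∘a`, the product maps `π`, `π°` and the flip map, each
characterized by its values on elementary tensors.  The norm is the projective tensor norm: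
`‖a ⊗ b‖ ≤ ‖a‖‖b‖` and every element is an absolutely convergent sum of elementary tensors
whose total norm is arbitrarily close to its norm; moreover bounded bilinear maps lift. -/
structure ProjTensorSquare (A : Type u) [NonUnitalNormedRing A] [NormedSpace ℂ A]
    [IsScalarTower ℂ A A] [SMulCommClass ℂ A A] [CompleteSpace A] where
  /-- the underlying Banach space of `A ⊗̂ A` -/
  T : Type u
  [nacg : NormedAddCommGroup T]
  [nsp : NormedSpace ℂ T]
  [cplt : CompleteSpace T]
  /-- the canonical bilinear map `(a, b) ↦ a ⊗ b` -/
  tmul : A →L[ℂ] A →L[ℂ] T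
  norm_tmul_le : ∀ a b : A, ‖tmul a b‖ ≤ ‖a‖ * ‖b‖
  /-- the projective norm property -/
  exists_rep : ∀ (t : T) (ε : ℝ), 0 < ε → ∃ u v : ℕ → A,
      Summable (fun n => ‖u n‖ * ‖v n‖) ∧ HasSum (fun n => tmul (u n) (v n)) t ∧
      ∑' n, ‖u n‖ * ‖v n‖ ≤ ‖t‖ + ε
  /-- the universal property: bounded bilinear maps into a Banach space lift to `T` -/
  lift : ∀ {X : Type u} [NormedAddCommGroup X] [NormedSpace ℂ X] [CompleteSpace X]
      (f : A →L[ℂ] A →L[ℂ] X), ∃ g : T →L[ℂ] X, (∀ a b, g (tmul a b) = f a b) ∧ ‖g‖ ≤ ‖f‖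
  /-- the left module action: `a • (b ⊗ c) = (a * b) ⊗ c` -/
  lmul : A → T →L[ℂ] T
  lmul_tmul : ∀ a b c, lmul a (tmul b c) = tmul (a * b) c
  /-- the right module action: `(b ⊗ c) • a = b ⊗ (c * a)` -/
  rmul : A → T →L[ℂ] T
  rmul_tmul : ∀ a b c, rmul a (tmul b c) = tmul b (c * a)
  /-- the left opposite action: `a ∘ (b ⊗ c) = b ⊗ (a * c)` -/
  lcirc : A → T →L[ℂ] T
  lcirc_tmul : ∀ a b c, lcirc a (tmul b c) = tmul b (a * c)
  /-- the right opposite action: `(b ⊗ c) ∘ a = (b * a) ⊗ c` -/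
  rcirc : A → T →L[ℂ] T
  rcirc_tmul : ∀ a b c, rcirc a (tmul b c) = tmul (b * a) c
  /-- the product map `π : b ⊗ c ↦ b * c` -/
  π : T →L[ℂ] A
  π_tmul : ∀ b c, π (tmul b c) = b * c
  /-- the opposite product map `π° : b ⊗ c ↦ c * b` -/
  πop : T →L[ℂ] A
  πop_tmul : ∀ b c, πop (tmul b c) = c * b
  /-- the flip map `(b ⊗ c)° = c ⊗ b` -/
  flip : T →L[ℂ] T
  flip_tmul : ∀ b c, flip (tmul b c) = tmul c b

attribute [instance] ProjTensorSquare.nacg ProjTensorSquare.nsp ProjTensorSquare.cplt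

namespace ProjTensorSquare

variable {A : Type u} [NonUnitalNormedRing A] [NormedSpace ℂ A]
    [IsScalarTower ℂ A A] [SMulCommClass ℂ A A] [CompleteSpace A]

/-- `t` is an approximate diagonal for `A` consisting of symmetric tensors, along the
filter `l`:  each `t i` is symmetric, `a • tᵢ - tᵢ • a → 0` and `π(tᵢ) a → a` for all `a`. -/
def IsSymmApproxDiagonal (P : ProjTensorSquare A) {ι : Type u} (l : Filter ι)
    (t : ι → P.T) : Prop :=
  (∀ i, P.flip (t i) = t i) ∧
  (∀ a : A, Tendsto (fun i => P.lmul a (t i) - P.rmul a (t i)) l (𝓝 0)) ∧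
  (∀ a : A, Tendsto (fun i => P.π (t i) * a) l (𝓝 a))

/-- A Banach algebra is symmetrically pseudo-amenable if it has a (not necessarily bounded)
approximate diagonal consisting of symmetric tensors. -/
def SymmPseudoAmenable (P : ProjTensorSquare A) : Prop :=
  ∃ (ι : Type u) (l : Filter ι) (t : ι → P.T), l.NeBot ∧ P.IsSymmApproxDiagonal l t

end ProjTensorSquare

/-- A Banach `A`-bimodule: a Banach space with commuting bounded left and right `A`-actions. -/
structure BanachBimodule (A X : Type u) [NonUnitalNormedRing A] [NormedSpace ℂ A]
    [NormedAddCommGroup X] [NormedSpace ℂ X] where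
  /-- the left action `(a, x) ↦ a • x` -/
  lsmul : A →L[ℂ] X →L[ℂ] X
  /-- the right action `(a, x) ↦ x • a` -/
  rsmul : A →L[ℂ] X →L[ℂ] X
  lsmul_mul : ∀ a b x, lsmul (a * b) x = lsmul a (lsmul b x)
  rsmul_mul : ∀ a b x, rsmul (a * b) x = rsmul b (rsmul a x)
  lsmul_rsmul : ∀ a b x, lsmul a (rsmul b x) = rsmul b (lsmul a x)

namespace BanachBimodule

variable {A X : Type u} [NonUnitalNormedRing A] [NormedSpace ℂ A]
  [NormedAddCommGroup X] [NormedSpace ℂ X]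

/-- `D(ab) = D(a)·b + a·D(b)` -/
def IsDerivation (M : BanachBimodule A X) (D : A → X) : Prop :=
  ∀ a b, D (a * b) = M.rsmul b (D a) + M.lsmul a (D b)

/-- `D(ab + ba) = D(a)·b + a·D(b) + D(b)·a + b·D(a)` -/
def IsJordanDerivation (M : BanachBimodule A X) (D : A → X) : Prop :=
  ∀ a b, D (a * b + b * a) =
    M.rsmul b (D a) + M.lsmul a (D b) + M.rsmul a (D b) + M.lsmul b (D a)

/-- `D(ab − ba) = D(a)·b + a·D(b) − D(b)·a − b·D(a)` -/
def IsLieDerivation (M : BanachBimodule A X) (D : A → X) : Prop :=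
  ∀ a b, D (a * b - b * a) =
    M.rsmul b (D a) + M.lsmul a (D b) - M.rsmul a (D b) - M.lsmul b (D a)

/-- the center `Z_𝔘(X) = {x ∈ X | a·x = x·a for all a ∈ 𝔘}` -/
def center (M : BanachBimodule A X) : Set X := {x | ∀ a, M.lsmul a x = M.rsmul a x}

/-- the left action extended to the `ℓ¹`-unitization `𝔘♯`, via `1 • x = x` -/
noncomputable def uLsmul (M : BanachBimodule A X) (a : WithLp 1 (Unitization ℂ A)) (x : X) : X :=
  (WithLp.equiv 1 (Unitization ℂ A) a).fst • x + M.lsmul ((WithLp.equiv 1 (Unitization ℂ A)) a).snd x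

/-- the right action extended to the `ℓ¹`-unitization `𝔘♯`, via `x • 1 = x` -/
noncomputable def uRsmul (M : BanachBimodule A X) (a : WithLp 1 (Unitization ℂ A)) (x : X) : X :=
  (WithLp.equiv 1 (Unitization ℂ A) a).fst • x + M.rsmul ((WithLp.equiv 1 (Unitization ℂ A)) a).snd x

end BanachBimodule

/-!
Extend `D` to `B = 𝔘♯` by `D (λ, a) = D a`. Since `D` takes central values, the Jordan identity
becomes `D(pq) + D(qp) = 2 (p·Dq + q·Dp)` for the left action alone, i.e. the product rule
`D(pq) = p·Dq + q·Dp + Φ(p, q)` with the antisymmetric defect `Φ(p, q) = ½ D(pq - qp)`; it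
suffices to show `Φ = 0`.

Pair bilinear expressions in `D` and `Φ` with a symmetric approximate diagonal `tᵢ = Σ uₖ ⊗ vₖ`.
Expanding `D(uₖ c vₖ)` and `D(c uₖ vₖ)` in two ways, and using `tᵢ° = tᵢ`, `c·tᵢ - tᵢ·c → 0`
and `π(tᵢ) → 1`, one finds `Σ Φ(uₖ, vₖ c) → 3 D c` for every `c`. Finally the identity
`Φ(pu, vq) = Φ(p, uvq) + Φ(u, vqp)`, paired with `p·tᵢ·q`, gives
`3 D(pq) = Φ(p, q) + 3 D(qp)`, whence `D(pq) = D(qp)`; for a central Jordan derivation this is the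
derivation identity.
-/

namespace ProjTensorSquare

variable {A : Type u} [NonUnitalNormedRing A] [NormedSpace ℂ A]
    [IsScalarTower ℂ A A] [SMulCommClass ℂ A A] [CompleteSpace A] (P : ProjTensorSquare A)

theorem ext_tmul {Y : Type*} [NormedAddCommGroup Y] [NormedSpace ℂ Y] {F G : P.T →L[ℂ] Y}
    (h : ∀ u v, F (P.tmul u v) = G (P.tmul u v)) : F = G := by
  ext τ
  obtain ⟨u, v, -, hτ, -⟩ := P.exists_rep τ 1 one_pos
  rw [← (F.hasSum hτ).tsum_eq, ← (G.hasSum hτ).tsum_eq]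
  exact tsum_congr fun n => h (u n) (v n)

variable {X : Type u} [NormedAddCommGroup X] [NormedSpace ℂ X] [CompleteSpace X]

noncomputable def liftBilin (f : A →L[ℂ] A →L[ℂ] X) : P.T →L[ℂ] X :=
  (P.lift f).choose

@[simp]
theorem liftBilin_tmul (f : A →L[ℂ] A →L[ℂ] X) (u v : A) :
    P.liftBilin f (P.tmul u v) = f u v :=
  (P.lift f).choose_spec.1 u v

theorem rmul_rmul (p q : A) (τ : P.T) : P.rmul q (P.rmul p τ) = P.rmul (p * q) τ :=
  congr($(P.ext_tmul (F := (P.rmul q).comp (P.rmul p)) (G := P.rmul (p * q)) fun u v => by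
    simp only [ContinuousLinearMap.comp_apply, rmul_tmul, mul_assoc]) τ)

variable {P} {ι : Type u} {l : Filter ι} {t : ι → P.T}

namespace IsSymmApproxDiagonal

theorem flip_eq (ht : P.IsSymmApproxDiagonal l t) (i : ι) : P.flip (t i) = t i := ht.1 i

theorem tendsto_map_lmul_sub_map_rmul (ht : P.IsSymmApproxDiagonal l t) {Y : Type*}
    [NormedAddCommGroup Y] [NormedSpace ℂ Y] (F : P.T →L[ℂ] Y) (c : A) :
    Tendsto (fun i => F (P.lmul c (t i)) - F (P.rmul c (t i))) l (𝓝 0) := by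
  simpa only [Function.comp_def, map_sub, map_zero] using (F.continuous.tendsto 0).comp (ht.2.1 c)

end IsSymmApproxDiagonal

end ProjTensorSquare

namespace ProjTensorSquare.IsSymmApproxDiagonal

variable {B : Type u} [NormedRing B] [NormedAlgebra ℂ B] [CompleteSpace B]
  {P : ProjTensorSquare B} {ι : Type u} {l : Filter ι} {t : ι → P.T}

theorem tendsto_map_π (ht : P.IsSymmApproxDiagonal l t) {Y : Type*}
    [NormedAddCommGroup Y] [NormedSpace ℂ Y] (g : B →L[ℂ] Y) :
    Tendsto (fun i => g (P.π (t i))) l (𝓝 (g 1)) := by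
  simpa only [Function.comp_def, mul_one] using (g.continuous.tendsto 1).comp (ht.2.2 1)

end ProjTensorSquare.IsSymmApproxDiagonal

section SymmJordanDerivation

variable {B X : Type u} [NormedRing B] [NormedAlgebra ℂ B] [NormedAddCommGroup X]
  [NormedSpace ℂ X]

/-- A Jordan derivation into `X`, where `X` is made a bimodule by letting the unital left action
`L` act on both sides. -/
structure IsSymmJordanDerivation (L : B →L[ℂ] X →L[ℂ] X) (D : B →L[ℂ] X) : Prop where
  one_act : ∀ x, L 1 x = x
  mul_act : ∀ p q x, L (p * q) x = L p (L q x)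
  map_mul_add_map_mul : ∀ p q, D (p * q) + D (q * p) = (2 : ℂ) • (L p (D q) + L q (D p))

noncomputable def skewComp (D : B →L[ℂ] X) : B →L[ℂ] B →L[ℂ] X :=
  (2⁻¹ : ℂ) • ((ContinuousLinearMap.compL ℂ B B X D).comp (ContinuousLinearMap.mul ℂ B) -
    ((ContinuousLinearMap.compL ℂ B B X D).comp (ContinuousLinearMap.mul ℂ B)).flip)

variable {L : B →L[ℂ] X →L[ℂ] X} {D : B →L[ℂ] X}

theorem skewComp_apply (p q : B) : skewComp D p q = (2⁻¹ : ℂ) • (D (p * q) - D (q * p)) :=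
  rfl

theorem skewComp_swap (p q : B) : skewComp D q p = -skewComp D p q := by
  rw [skewComp_apply, skewComp_apply, ← smul_neg, neg_sub]

theorem skewComp_one_right (p : B) : skewComp D p 1 = 0 := by
  rw [skewComp_apply, mul_one, one_mul, sub_self, smul_zero]

theorem skewComp_mul_left (a b c : B) :
    skewComp D (a * b) c = skewComp D a (b * c) + skewComp D b (c * a) := by
  simp only [skewComp_apply, mul_assoc]
  module

namespace IsSymmJordanDerivation

theorem map_mul (hD : IsSymmJordanDerivation L D) (p q : B) :
    D (p * q) = L p (D q) + L q (D p) + skewComp D p q := by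
  have h := congrArg ((2⁻¹ : ℂ) • ·) (hD.map_mul_add_map_mul p q)
  simp only [smul_smul, skewComp_apply] at h ⊢
  norm_num at h
  rw [← h]
  module

theorem map_one (hD : IsSymmJordanDerivation L D) : D 1 = 0 := by
  have h := hD.map_mul_add_map_mul 1 1
  rw [one_mul, hD.one_act] at h
  have h2 : (2 : ℂ) • D 1 = 0 := by linear_combination (norm := module) -h
  exact (smul_eq_zero.mp h2).resolve_left two_ne_zero

/-- The two ways of expanding `D(pqr)` by the product rule. -/
theorem cocycle (hD : IsSymmJordanDerivation L D) (p q r : B) :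
    skewComp D (p * q) r + L r (skewComp D p q) + L (r * p) (D q) + L (r * q) (D p) =
      skewComp D p (q * r) + L p (skewComp D q r) + L (p * r) (D q) + L (q * r) (D p) := by
  have h := congrArg D (mul_assoc p q r)
  simp only [hD.map_mul, map_add, hD.mul_act] at h ⊢
  linear_combination (norm := abel) h

end IsSymmJordanDerivation

end SymmJordanDerivation

section TensorPairings

open ContinuousLinearMap

variable {B X : Type u} [NormedRing B] [NormedAlgebra ℂ B] [CompleteSpace B]
  [NormedAddCommGroup X] [NormedSpace ℂ X] [CompleteSpace X]
  (P : ProjTensorSquare B) {L : B →L[ℂ] X →L[ℂ] X} {D : B →L[ℂ] X}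

-- on `u ⊗ v`: `Φ̂ ↦ Φ(u, v)`, `N̂ ↦ v·D u`, `K̂ c ↦ v·Φ(c, u)`, where `Φ = skewComp D`
local notation "Φ̂" => P.liftBilin (skewComp D)
local notation "N̂" => P.liftBilin (L.flip.comp D)
local notation:max "K̂" c:max => P.liftBilin (L.flip.comp (skewComp D c))

theorem ProjTensorSquare.liftBilin_skewComp_comp_flip : (Φ̂).comp P.flip = -Φ̂ :=
  P.ext_tmul fun u v => by
    simp only [comp_apply, neg_apply, P.flip_tmul, P.liftBilin_tmul]
    exact skewComp_swap u v

theorem ProjTensorSquare.liftBilin_skewComp_comp_rmul_comp_lmul (p q : B) :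
    (Φ̂).comp ((P.rmul q).comp (P.lmul p)) =
      (skewComp D p).comp (((mul ℂ B).flip q).comp P.π)
        + (Φ̂).comp (P.rmul (q * p)) :=
  P.ext_tmul fun u v => by
    simp only [comp_apply, add_apply, flip_apply, mul_apply', P.lmul_tmul, P.rmul_tmul,
      P.π_tmul, P.liftBilin_tmul, skewComp_mul_left p u, mul_assoc]

namespace IsSymmJordanDerivation

theorem comp_π (hD : IsSymmJordanDerivation L D) :
    D.comp P.π = (N̂).comp P.flip + N̂ + Φ̂ :=
  P.ext_tmul fun u v => by
    simp only [comp_apply, add_apply, flip_apply, P.flip_tmul, P.π_tmul, P.liftBilin_tmul]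
    exact hD.map_mul u v

theorem liftBilin_comp_lmul (hD : IsSymmJordanDerivation L D) (c : B) :
    (N̂).comp (P.lmul c) =
      (N̂).comp (P.rmul c) + (L.flip (D c)).comp (P.π.comp P.flip) + K̂ c :=
  P.ext_tmul fun u v => by
    simp only [comp_apply, add_apply, flip_apply, P.lmul_tmul, P.rmul_tmul, P.flip_tmul,
      P.π_tmul, P.liftBilin_tmul, hD.map_mul c u, map_add, hD.mul_act]

/-- `hD.cocycle u c v`, read on `u ⊗ v`. -/
theorem cocycle_liftBilin_rmul (hD : IsSymmJordanDerivation L D) (c : B) :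
    -(Φ̂).comp ((P.rmul c).comp P.flip) - K̂ c + (L.flip (D c)).comp (P.π.comp P.flip)
        + (N̂).comp (P.rmul c) =
      -(Φ̂).comp ((P.lmul c).comp P.flip) + (K̂ c).comp P.flip + (L.flip (D c)).comp P.π
        + (L c).comp N̂ :=
  P.ext_tmul fun u v => by
    have h := hD.cocycle u c v
    simp only [comp_apply, add_apply, sub_apply, neg_apply, flip_apply, P.lmul_tmul,
      P.rmul_tmul, P.flip_tmul, P.π_tmul, P.liftBilin_tmul, ← hD.mul_act]
    rw [skewComp_swap (c * v), skewComp_swap v, skewComp_swap c u, map_neg] at h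
    linear_combination (norm := abel) h

/-- `hD.cocycle c u v`, read on `u ⊗ v`. -/
theorem cocycle_liftBilin_lmul (hD : IsSymmJordanDerivation L D) (c : B) :
    (Φ̂).comp (P.lmul c) + K̂ c + (N̂).comp (P.rmul c)
        + (L.flip (D c)).comp (P.π.comp P.flip) =
      (skewComp D c).comp P.π + (L c).comp Φ̂ + (L c).comp N̂ + (L.flip (D c)).comp P.π :=
  P.ext_tmul fun u v => by
    simp only [comp_apply, add_apply, flip_apply, P.lmul_tmul, P.rmul_tmul, P.flip_tmul,
      P.π_tmul, P.liftBilin_tmul, ← hD.mul_act]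
    exact hD.cocycle c u v

end IsSymmJordanDerivation

variable {P} {ι : Type u} {l : Filter ι} {t : ι → P.T}

theorem ProjTensorSquare.IsSymmApproxDiagonal.liftBilin_skewComp_eq_zero
    (ht : P.IsSymmApproxDiagonal l t) (i : ι) : Φ̂ (t i) = 0 := by
  have h := congr($(P.liftBilin_skewComp_comp_flip (D := D)) (t i))
  rw [comp_apply, neg_apply, ht.flip_eq] at h
  have h2 : (2 : ℂ) • Φ̂ (t i) = 0 := by linear_combination (norm := module) h
  exact (smul_eq_zero.mp h2).resolve_left two_ne_zero

namespace IsSymmJordanDerivation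

theorem tendsto_liftBilin_flip_comp (hD : IsSymmJordanDerivation L D)
    (ht : P.IsSymmApproxDiagonal l t) : Tendsto (fun i => N̂ (t i)) l (𝓝 0) := by
  have key : ∀ i, N̂ (t i) = (2⁻¹ : ℂ) • D (P.π (t i)) := fun i => by
    have h := congr($(hD.comp_π P) (t i))
    rw [comp_apply, add_apply, add_apply, comp_apply, ht.flip_eq,
      ht.liftBilin_skewComp_eq_zero, add_zero, ← two_smul ℂ] at h
    rw [h, smul_smul, inv_mul_cancel₀ two_ne_zero, one_smul]
  have lim := (ht.tendsto_map_π D).const_smul (2⁻¹ : ℂ)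
  rw [hD.map_one, smul_zero] at lim
  exact lim.congr fun i => (key i).symm

theorem tendsto_liftBilin_flip_comp_skewComp (hD : IsSymmJordanDerivation L D)
    (ht : P.IsSymmApproxDiagonal l t) (c : B) :
    Tendsto (fun i => K̂ c (t i)) l (𝓝 (-D c)) := by
  have key : ∀ i, K̂ c (t i) =
      (N̂ (P.lmul c (t i)) - N̂ (P.rmul c (t i))) - L.flip (D c) (P.π (t i)) := fun i => by
    have h := congr($(hD.liftBilin_comp_lmul P c) (t i))
    simp only [comp_apply, add_apply, ht.flip_eq] at h
    rw [h]
    abel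
  have lim := (ht.tendsto_map_lmul_sub_map_rmul N̂ c).sub (ht.tendsto_map_π (L.flip (D c)))
  rw [zero_sub, flip_apply, hD.one_act] at lim
  exact lim.congr fun i => (key i).symm

theorem tendsto_liftBilin_flip_comp_rmul (hD : IsSymmJordanDerivation L D)
    (ht : P.IsSymmApproxDiagonal l t) (c : B) :
    Tendsto (fun i => N̂ (P.rmul c (t i))) l (𝓝 ((-2 : ℂ) • D c)) := by
  have key : ∀ i, N̂ (P.rmul c (t i)) =
      (2 : ℂ) • K̂ c (t i) + L c (N̂ (t i))
        - (Φ̂ (P.lmul c (t i)) - Φ̂ (P.rmul c (t i))) := fun i => by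
    have h := congr($(hD.cocycle_liftBilin_rmul P c) (t i))
    simp only [comp_apply, add_apply, sub_apply, neg_apply, ht.flip_eq] at h
    linear_combination (norm := module) h
  have lim := (((hD.tendsto_liftBilin_flip_comp_skewComp ht c).const_smul (2 : ℂ)).add
    (((L c).continuous.tendsto 0).comp (hD.tendsto_liftBilin_flip_comp ht))).sub
    (ht.tendsto_map_lmul_sub_map_rmul Φ̂ c)
  rw [map_zero, add_zero, sub_zero, smul_neg, ← neg_smul] at lim
  exact lim.congr fun i => (key i).symm

theorem tendsto_liftBilin_skewComp_lmul (hD : IsSymmJordanDerivation L D)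
    (ht : P.IsSymmApproxDiagonal l t) (c : B) :
    Tendsto (fun i => Φ̂ (P.lmul c (t i))) l (𝓝 ((3 : ℂ) • D c)) := by
  have key : ∀ i, Φ̂ (P.lmul c (t i)) =
      skewComp D c (P.π (t i)) + L c (N̂ (t i))
        - K̂ c (t i) - N̂ (P.rmul c (t i)) := fun i => by
    have h := congr($(hD.cocycle_liftBilin_lmul P c) (t i))
    simp only [comp_apply, add_apply, ht.flip_eq, ht.liftBilin_skewComp_eq_zero, map_zero] at h
    linear_combination (norm := module) h
  have lim := (((ht.tendsto_map_π (skewComp D c)).add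
    (((L c).continuous.tendsto 0).comp (hD.tendsto_liftBilin_flip_comp ht))).sub
    (hD.tendsto_liftBilin_flip_comp_skewComp ht c)).sub (hD.tendsto_liftBilin_flip_comp_rmul ht c)
  rw [skewComp_one_right, map_zero, add_zero, zero_sub] at lim
  convert lim.congr fun i => (key i).symm using 2
  module

theorem tendsto_liftBilin_skewComp_rmul (hD : IsSymmJordanDerivation L D)
    (ht : P.IsSymmApproxDiagonal l t) (c : B) :
    Tendsto (fun i => Φ̂ (P.rmul c (t i))) l (𝓝 ((3 : ℂ) • D c)) := by
  have lim :=
    (hD.tendsto_liftBilin_skewComp_lmul ht c).sub (ht.tendsto_map_lmul_sub_map_rmul Φ̂ c)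
  rw [sub_zero] at lim
  exact lim.congr fun i => sub_sub_cancel _ _

theorem map_mul_comm (hD : IsSymmJordanDerivation L D) (ht : P.IsSymmApproxDiagonal l t)
    [l.NeBot] (p q : B) : D (p * q) = D (q * p) := by
  have lim₁ : Tendsto (fun i => Φ̂ (P.rmul q (P.lmul p (t i)))) l
      (𝓝 ((3 : ℂ) • D (p * q))) := by
    have lim := (ht.tendsto_map_lmul_sub_map_rmul (Φ̂.comp (P.rmul q)) p).add
      (hD.tendsto_liftBilin_skewComp_rmul ht (p * q))
    rw [zero_add] at lim
    refine lim.congr fun i => ?_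
    simp only [comp_apply, P.rmul_rmul, sub_add_cancel]
  have lim₂ : Tendsto (fun i => Φ̂ (P.rmul q (P.lmul p (t i)))) l
      (𝓝 (skewComp D p q + (3 : ℂ) • D (q * p))) := by
    have lim := (ht.tendsto_map_π ((skewComp D p).comp ((mul ℂ B).flip q))).add
      (hD.tendsto_liftBilin_skewComp_rmul ht (q * p))
    rw [comp_apply, flip_apply, mul_apply', one_mul] at lim
    refine lim.congr fun i => ?_
    simpa only [comp_apply, add_apply] using
      congr($(P.liftBilin_skewComp_comp_rmul_comp_lmul (D := D) p q) (t i)).symm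
  have h := tendsto_nhds_unique lim₁ lim₂
  rw [skewComp_apply] at h
  have h2 : (5 / 2 : ℂ) • (D (p * q) - D (q * p)) = 0 := by
    linear_combination (norm := module) h
  exact sub_eq_zero.mp ((smul_eq_zero.mp h2).resolve_left (by norm_num))

end IsSymmJordanDerivation

end TensorPairings

namespace BanachBimodule

variable {A X : Type u} [NonUnitalNormedRing A] [NormedSpace ℂ A] [NormedAddCommGroup X]
  [NormedSpace ℂ X] {M : BanachBimodule A X} {D : A →L[ℂ] X}

theorem IsJordanDerivation.map_mul_add_map_mul (hD : M.IsJordanDerivation D)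
    (hc : ∀ a, D a ∈ M.center) (a b : A) :
    D (a * b) + D (b * a) = (2 : ℂ) • (M.lsmul a (D b) + M.lsmul b (D a)) := by
  rw [← map_add, hD a b, ← hc a b, ← hc b a]
  module

theorem IsJordanDerivation.isDerivation_of_map_mul_comm (hD : M.IsJordanDerivation D)
    (hc : ∀ a, D a ∈ M.center) (hcomm : ∀ a b, D (a * b) = D (b * a)) : M.IsDerivation D := by
  intro a b
  have h := hD.map_mul_add_map_mul hc a b
  rw [← hcomm a b, ← two_smul ℂ, smul_right_inj two_ne_zero] at h
  rw [h, hc a b, add_comm]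

end BanachBimodule

section Unitization

open WithLp

variable {A X : Type u} [NonUnitalNormedRing A] [NormedSpace ℂ A] [IsScalarTower ℂ A A]
  [SMulCommClass ℂ A A]

noncomputable def unitizationFstL : WithLp 1 (Unitization ℂ A) →L[ℂ] ℂ :=
  LinearMap.mkContinuous
    ((Unitization.fstHom ℂ A).toLinearMap.comp (WithLp.linearEquiv 1 ℂ _).toLinearMap) 1
    fun p => by
      rw [one_mul, unitization_norm_def]
      exact le_add_of_nonneg_right (norm_nonneg _)

noncomputable def unitizationSndL : WithLp 1 (Unitization ℂ A) →L[ℂ] A :=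
  LinearMap.mkContinuous
    ((Unitization.sndHom ℂ ℂ A).comp (WithLp.linearEquiv 1 ℂ _).toLinearMap) 1
    fun p => by
      rw [one_mul, unitization_norm_def]
      exact le_add_of_nonneg_left (norm_nonneg _)

theorem unitizationSndL_apply (p : WithLp 1 (Unitization ℂ A)) :
    unitizationSndL p = (ofLp p).snd := rfl

namespace BanachBimodule

variable [NormedAddCommGroup X] [NormedSpace ℂ X] (M : BanachBimodule A X)

noncomputable def uLsmulL : WithLp 1 (Unitization ℂ A) →L[ℂ] X →L[ℂ] X :=
  (ContinuousLinearMap.lsmul ℂ ℂ).comp unitizationFstL + M.lsmul.comp unitizationSndL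

theorem uLsmulL_apply (p : WithLp 1 (Unitization ℂ A)) (x : X) : M.uLsmulL p x = M.uLsmul p x :=
  rfl

theorem uLsmul_one (x : X) : M.uLsmul 1 x = x := by
  simp [uLsmul, show ofLp (1 : WithLp 1 (Unitization ℂ A)) = 1 from rfl]

theorem uLsmul_mul (p q : WithLp 1 (Unitization ℂ A)) (x : X) :
    M.uLsmul (p * q) x = M.uLsmul p (M.uLsmul q x) := by
  simp only [uLsmul, WithLp.equiv_apply, unitization_mul, Unitization.fst_mul,
    Unitization.snd_mul, map_add, map_smul, add_apply, smul_apply, M.lsmul_mul]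
  module

variable {M} {D : A →L[ℂ] X}

theorem IsJordanDerivation.isSymmJordanDerivation_unitization (hD : M.IsJordanDerivation D)
    (hc : ∀ a, D a ∈ M.center) : IsSymmJordanDerivation M.uLsmulL (D.comp unitizationSndL) where
  one_act := M.uLsmul_one
  mul_act p q x := by simpa only [uLsmulL_apply] using M.uLsmul_mul p q x
  map_mul_add_map_mul p q := by
    have h := hD.map_mul_add_map_mul hc (ofLp p).snd (ofLp q).snd
    simp only [ContinuousLinearMap.comp_apply, unitizationSndL_apply, unitization_mul,
      Unitization.snd_mul, map_add, map_smul, uLsmulL_apply, uLsmul, WithLp.equiv_apply]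
    linear_combination (norm := module) h

end BanachBimodule

end Unitization

/-- Let `𝔘` be a Banach algebra such that its `ℓ¹`-unitization `𝔘♯` is
symmetrically pseudo-amenable, and `X` a Banach `𝔘`-bimodule.  Then every bounded central
Jordan derivation from `𝔘` to `X` (i.e. with range in `Z_𝔘(X)`) is a derivation. -/
theorem central_jordanDerivation_isDerivation {A X : Type u} [NonUnitalNormedRing A] [NormedSpace ℂ A]
    [IsScalarTower ℂ A A] [SMulCommClass ℂ A A] [CompleteSpace A]
    [NormedAddCommGroup X] [NormedSpace ℂ X] [CompleteSpace X]
    (P : ProjTensorSquare (WithLp 1 (Unitization ℂ A))) (hP : P.SymmPseudoAmenable)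
    (M : BanachBimodule A X) (D : A →L[ℂ] X)
    (hD : M.IsJordanDerivation D) (hcentral : ∀ a, D a ∈ M.center) :
    M.IsDerivation D := by
  obtain ⟨ι, l, t, hl, ht⟩ := hP
  have hcomm := (hD.isSymmJordanDerivation_unitization hcentral).map_mul_comm ht
  refine hD.isDerivation_of_map_mul_comm hcentral fun a b => ?_
  simpa [unitizationSndL_apply] using
    hcomm (WithLp.toLp 1 (a : Unitization ℂ A)) (WithLp.toLp 1 (b : Unitization ℂ A))
end

section
/- If 𝔘 is a Banach algebra with 𝔘♯ symmetrically pseudo-amenable, then every bounded Jordan derivation from 𝔘 into a symmetric Banach 𝔘-bimodule X is a derivation. -/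
open Filter Topology

universe u

/-!
Extend `D` to `𝔘♯` by `D(1) = 0` and let `𝔘♯` act on `X` through the left action. Since `X` is
symmetric, this action is commutative, so the defect `δ(u, v) = D(uv) - u·D(v) - v·D(u)` is a
Hochschild 2-cocycle, and the Jordan identity makes it skew-symmetric. For a symmetric tensor
`t = ∑ u ⊗ v`, skew-symmetry and the cocycle identity give `2 ∑ u·δ(v, c) = ∑ δ(u, vc) - δ(cu, v)`,
which tends to `0` along a symmetric approximate diagonal. The cocycle identity also writes
`π(t)·δ(a, b)` in terms of such sums and of `a·t - t·a`, and `π(tᵢ) → 1` then forces `δ = 0`.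
-/

namespace ProjTensorSquare

section NonUnital

variable {C : Type u} [NonUnitalNormedRing C] [NormedSpace ℂ C]
    [IsScalarTower ℂ C C] [SMulCommClass ℂ C C] [CompleteSpace C] (P : ProjTensorSquare C)

theorem ext_tmul_s15 {Y : Type*} [AddCommMonoid Y] [Module ℂ Y] [TopologicalSpace Y] [T2Space Y]
    {f g : P.T →L[ℂ] Y} (h : ∀ a b, f (P.tmul a b) = g (P.tmul a b)) : f = g := by
  ext s
  obtain ⟨u, v, -, hs, -⟩ := P.exists_rep s 1 one_pos
  exact (f.hasSum hs).unique (by simpa only [h] using g.hasSum hs)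

theorem flip_lcirc (c : C) (s : P.T) : P.flip (P.lcirc c s) = P.lmul c (P.flip s) :=
  DFunLike.congr_fun (P.ext_tmul_s15 (f := P.flip ∘L P.lcirc c) (g := P.lmul c ∘L P.flip)
    fun a b => by simp [P.lcirc_tmul, P.flip_tmul, P.lmul_tmul]) s

theorem flip_rcirc (c : C) (s : P.T) : P.flip (P.rcirc c s) = P.rmul c (P.flip s) :=
  DFunLike.congr_fun (P.ext_tmul_s15 (f := P.flip ∘L P.rcirc c) (g := P.rmul c ∘L P.flip)
    fun a b => by simp [P.rcirc_tmul, P.flip_tmul, P.rmul_tmul]) s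

variable {X : Type u} [NormedAddCommGroup X] [NormedSpace ℂ X] [CompleteSpace X]

noncomputable def liftCLM (β : C →L[ℂ] C →L[ℂ] X) : P.T →L[ℂ] X :=
  (P.lift β).choose

@[simp]
theorem liftCLM_tmul (β : C →L[ℂ] C →L[ℂ] X) (a b : C) :
    P.liftCLM β (P.tmul a b) = β a b :=
  (P.lift β).choose_spec.1 a b

end NonUnital

noncomputable def smulDefect {C X : Type*} [NormedAddCommGroup C] [NormedSpace ℂ C]
    [NormedAddCommGroup X] [NormedSpace ℂ X]
    (σ : C →L[ℂ] X →L[ℂ] X) (δ : C →L[ℂ] C →L[ℂ] X) (c : C) : C →L[ℂ] C →L[ℂ] X :=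
  σ.bilinearComp (.id ℂ C) (δ.flip c)

@[simp]
theorem smulDefect_apply {C X : Type*} [NormedAddCommGroup C] [NormedSpace ℂ C]
    [NormedAddCommGroup X] [NormedSpace ℂ X]
    (σ : C →L[ℂ] X →L[ℂ] X) (δ : C →L[ℂ] C →L[ℂ] X) (c u v : C) :
    smulDefect σ δ c u v = σ u (δ v c) := rfl

section SkewCocycle

variable {C : Type u} [NormedRing C] [NormedAlgebra ℂ C] [CompleteSpace C] (P : ProjTensorSquare C)
  {X : Type u} [NormedAddCommGroup X] [NormedSpace ℂ X] [CompleteSpace X]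
  {σ : C →L[ℂ] X →L[ℂ] X} {δ : C →L[ℂ] C →L[ℂ] X}

theorem liftCLM_flip (hskew : ∀ u v, δ v u = -δ u v) (s : P.T) :
    P.liftCLM δ (P.flip s) = -P.liftCLM δ s :=
  DFunLike.congr_fun (P.ext_tmul_s15 (f := P.liftCLM δ ∘L P.flip) (g := -P.liftCLM δ)
    fun a b => by simp [P.flip_tmul, hskew a b]) s

theorem liftCLM_rcirc (hskew : ∀ u v, δ v u = -δ u v)
    (hcoc : ∀ u v w, δ (u * v) w = σ u (δ v w) + δ u (v * w) - σ w (δ u v)) (c : C) (s : P.T) :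
    P.liftCLM δ (P.rcirc c s) = P.liftCLM δ (P.lcirc c s) - P.liftCLM (smulDefect σ δ c) s
      - P.liftCLM (smulDefect σ δ c) (P.flip s) := by
  refine DFunLike.congr_fun (P.ext_tmul_s15 (f := P.liftCLM δ ∘L P.rcirc c)
    (g := P.liftCLM δ ∘L P.lcirc c - P.liftCLM (smulDefect σ δ c)
      - P.liftCLM (smulDefect σ δ c) ∘L P.flip) fun a b => ?_) s
  simp [P.rcirc_tmul, P.lcirc_tmul, P.flip_tmul, hcoc a c b, hskew b c]
  abel

theorem liftCLM_smulDefect_of_flip_eq (hskew : ∀ u v, δ v u = -δ u v)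
    (hcoc : ∀ u v w, δ (u * v) w = σ u (δ v w) + δ u (v * w) - σ w (δ u v)) (c : C) {t : P.T}
    (ht : P.flip t = t) :
    P.liftCLM (smulDefect σ δ c) t = -(2 : ℂ)⁻¹ • P.liftCLM δ (P.lmul c t - P.rmul c t) := by
  have hl : P.liftCLM δ (P.lmul c t) = -P.liftCLM δ (P.lcirc c t) := by
    rw [← ht, ← flip_lcirc, liftCLM_flip P hskew, ht]
  have hr : P.liftCLM δ (P.rmul c t) = -P.liftCLM δ (P.rcirc c t) := by
    rw [← ht, ← flip_rcirc, liftCLM_flip P hskew, ht]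
  rw [map_sub, hl, hr, liftCLM_rcirc P hskew hcoc, ht]
  module

theorem π_smul_defect_eq (hσmul : ∀ u v, σ (u * v) = σ u * σ v)
    (hσcomm : ∀ u v, Commute (σ u) (σ v))
    (hcoc : ∀ u v w, δ (u * v) w = σ u (δ v w) + δ u (v * w) - σ w (δ u v)) (a b : C) (s : P.T) :
    σ (P.π s) (δ a b) = σ a (P.liftCLM (smulDefect σ δ b) s)
      - P.liftCLM (smulDefect σ δ b) (P.lmul a s - P.rmul a s)
      + σ b (P.liftCLM (smulDefect σ δ a) s) - P.liftCLM (smulDefect σ δ (a * b)) s := by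
  refine DFunLike.congr_fun (P.ext_tmul_s15 (f := σ.flip (δ a b) ∘L P.π)
    (g := σ a ∘L P.liftCLM (smulDefect σ δ b)
      - P.liftCLM (smulDefect σ δ b) ∘L (P.lmul a - P.rmul a)
      + σ b ∘L P.liftCLM (smulDefect σ δ a) - P.liftCLM (smulDefect σ δ (a * b)))
    fun u v => ?_) s
  have hcoc' := congrArg (σ u) (hcoc v a b)
  have hub := DFunLike.congr_fun (hσcomm u b).eq (δ v a)
  simp only [ContinuousLinearMap.comp_apply, ContinuousLinearMap.flip_apply, P.π_tmul,
    sub_apply, add_apply, P.lmul_tmul, P.rmul_tmul, liftCLM_tmul, smulDefect_apply, hσmul,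
    mul_apply_eq_comp, map_add, map_sub] at hcoc' hub ⊢
  rw [hcoc', hub]
  abel

theorem eq_zero_of_symmPseudoAmenable (hP : P.SymmPseudoAmenable) (hσone : σ 1 = 1)
    (hσmul : ∀ u v, σ (u * v) = σ u * σ v) (hσcomm : ∀ u v, Commute (σ u) (σ v))
    (hskew : ∀ u v, δ v u = -δ u v)
    (hcoc : ∀ u v w, δ (u * v) w = σ u (δ v w) + δ u (v * w) - σ w (δ u v)) : δ = 0 := by
  obtain ⟨ι, l, t, hl, hflip, hcomm, hπ⟩ := hP
  have hΨ (c : C) : Tendsto (fun i => P.liftCLM (smulDefect σ δ c) (t i)) l (𝓝 0) := by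
    simpa [Function.comp_def, liftCLM_smulDefect_of_flip_eq P hskew hcoc c (hflip _)] using
      (((-(2 : ℂ)⁻¹ • P.liftCLM δ).continuous.tendsto 0).comp (hcomm c))
  ext a b
  have hlim : Tendsto (fun i => σ (P.π (t i)) (δ a b)) l (𝓝 (δ a b)) := by
    simpa [Function.comp_def, hσone] using
      ((σ.flip (δ a b)).continuous.tendsto 1).comp (by simpa using hπ 1)
  refine tendsto_nhds_unique hlim ?_
  simpa [Function.comp_def, π_smul_defect_eq P hσmul hσcomm hcoc] using
    (((((σ a).continuous.tendsto 0).comp (hΨ b)).sub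
      (((P.liftCLM (smulDefect σ δ b)).continuous.tendsto 0).comp (hcomm a))).add
      (((σ b).continuous.tendsto 0).comp (hΨ a))).sub (hΨ (a * b))

end SkewCocycle

end ProjTensorSquare

namespace WithLp

variable {𝕜 A : Type*} [NormedField 𝕜] [NonUnitalNormedRing A] [NormedSpace 𝕜 A]

noncomputable def unitizationFstCLM : WithLp 1 (Unitization 𝕜 A) →L[𝕜] 𝕜 :=
  LinearMap.mkContinuous
    { toFun := fun u => (ofLp u).fst
      map_add' := fun _ _ => rfl
      map_smul' := fun _ _ => rfl } 1
    fun u => (one_mul ‖u‖).symm ▸ unitization_norm_def u ▸ le_add_of_nonneg_right (norm_nonneg _)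

@[simp]
theorem unitizationFstCLM_apply (u : WithLp 1 (Unitization 𝕜 A)) :
    unitizationFstCLM u = (ofLp u).fst := rfl

noncomputable def unitizationSndCLM : WithLp 1 (Unitization 𝕜 A) →L[𝕜] A :=
  LinearMap.mkContinuous
    { toFun := fun u => (ofLp u).snd
      map_add' := fun _ _ => rfl
      map_smul' := fun _ _ => rfl } 1
    fun u => (one_mul ‖u‖).symm ▸ unitization_norm_def u ▸ le_add_of_nonneg_left (norm_nonneg _)

@[simp]
theorem unitizationSndCLM_apply (u : WithLp 1 (Unitization 𝕜 A)) :
    unitizationSndCLM u = (ofLp u).snd := rfl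

@[simp]
theorem unitization_one [IsScalarTower 𝕜 A A] [SMulCommClass 𝕜 A A] :
    ofLp (1 : WithLp 1 (Unitization 𝕜 A)) = 1 := rfl

end WithLp

namespace BanachBimodule

open WithLp

variable {A X : Type u} [NonUnitalNormedRing A] [NormedSpace ℂ A]
  [IsScalarTower ℂ A A] [SMulCommClass ℂ A A]
  [NormedAddCommGroup X] [NormedSpace ℂ X] (M : BanachBimodule A X)

noncomputable def uLsmulCLM : WithLp 1 (Unitization ℂ A) →L[ℂ] X →L[ℂ] X :=
  (ContinuousLinearMap.lsmul ℂ ℂ).comp unitizationFstCLM + M.lsmul.comp unitizationSndCLM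

@[simp]
theorem uLsmulCLM_apply (u : WithLp 1 (Unitization ℂ A)) (x : X) :
    M.uLsmulCLM u x = M.uLsmul u x := by
  simp [uLsmulCLM, uLsmul]

theorem uLsmulCLM_one : M.uLsmulCLM 1 = 1 := by
  ext x
  simp [uLsmul]

theorem uLsmulCLM_mul (u v : WithLp 1 (Unitization ℂ A)) :
    M.uLsmulCLM (u * v) = M.uLsmulCLM u * M.uLsmulCLM v := by
  ext x
  simp only [uLsmulCLM_apply, mul_apply_eq_comp, uLsmul, WithLp.equiv_apply, unitization_mul,
    Unitization.fst_mul, Unitization.snd_mul, map_add, map_smul, add_apply, smul_apply,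
    M.lsmul_mul, smul_add, mul_smul, smul_comm (ofLp u).fst (ofLp v).fst x]
  abel

theorem commute_uLsmulCLM (hsymm : ∀ (a : A) (x : X), M.lsmul a x = M.rsmul a x)
    (u v : WithLp 1 (Unitization ℂ A)) : Commute (M.uLsmulCLM u) (M.uLsmulCLM v) := by
  have hcomm (a b : A) (x : X) : M.lsmul a (M.lsmul b x) = M.lsmul b (M.lsmul a x) := by
    rw [hsymm b x, M.lsmul_rsmul, ← hsymm]
  ext x
  simp only [uLsmulCLM_apply, mul_apply_eq_comp, uLsmul, WithLp.equiv_apply, map_add, map_smul,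
    smul_add, hcomm (ofLp u).snd, smul_comm (ofLp u).fst (ofLp v).fst x]
  abel

noncomputable def jordanDefect (D : A →L[ℂ] X) :
    WithLp 1 (Unitization ℂ A) →L[ℂ] WithLp 1 (Unitization ℂ A) →L[ℂ] X :=
  let D' := D.comp unitizationSndCLM
  (ContinuousLinearMap.compL ℂ _ _ X D').comp (ContinuousLinearMap.mul ℂ _)
    - M.uLsmulCLM.bilinearComp (.id ℂ _) D' - (M.uLsmulCLM.bilinearComp (.id ℂ _) D').flip

theorem jordanDefect_apply (D : A →L[ℂ] X) (u v : WithLp 1 (Unitization ℂ A)) :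
    M.jordanDefect D u v = D (ofLp (u * v)).snd - M.uLsmulCLM u (D (ofLp v).snd)
      - M.uLsmulCLM v (D (ofLp u).snd) := rfl

theorem jordanDefect_apply_eq_snd (D : A →L[ℂ] X) (u v : WithLp 1 (Unitization ℂ A)) :
    M.jordanDefect D u v = D ((ofLp u).snd * (ofLp v).snd) - M.lsmul (ofLp u).snd (D (ofLp v).snd)
      - M.lsmul (ofLp v).snd (D (ofLp u).snd) := by
  simp only [jordanDefect_apply, uLsmulCLM_apply, uLsmul, WithLp.equiv_apply, unitization_mul,
    Unitization.snd_mul, map_add, map_smul]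
  abel

theorem jordanDefect_swap (hsymm : ∀ (a : A) (x : X), M.lsmul a x = M.rsmul a x)
    {D : A →L[ℂ] X} (hD : M.IsJordanDerivation D) (u v : WithLp 1 (Unitization ℂ A)) :
    M.jordanDefect D v u = -M.jordanDefect D u v := by
  have h := hD (ofLp u).snd (ofLp v).snd
  rw [map_add, ← hsymm, ← hsymm] at h
  rw [jordanDefect_apply_eq_snd, jordanDefect_apply_eq_snd, eq_neg_iff_add_eq_zero,
    ← sub_eq_zero.mpr h]
  abel

theorem jordanDefect_mul_left (hsymm : ∀ (a : A) (x : X), M.lsmul a x = M.rsmul a x)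
    (D : A →L[ℂ] X) (u v w : WithLp 1 (Unitization ℂ A)) :
    M.jordanDefect D (u * v) w = M.uLsmulCLM u (M.jordanDefect D v w)
      + M.jordanDefect D u (v * w) - M.uLsmulCLM w (M.jordanDefect D u v) := by
  have hw (z : WithLp 1 (Unitization ℂ A)) (x : X) :
      M.uLsmulCLM w (M.uLsmulCLM z x) = M.uLsmulCLM z (M.uLsmulCLM w x) :=
    DFunLike.congr_fun (M.commute_uLsmulCLM hsymm w z).eq x
  simp only [jordanDefect_apply, map_sub, M.uLsmulCLM_mul, mul_apply_eq_comp, mul_assoc, hw]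
  abel

end BanachBimodule

/-- If `𝔘` is a Banach algebra with `𝔘♯` symmetrically pseudo-amenable, then
every bounded Jordan derivation from `𝔘` into a symmetric Banach `𝔘`-bimodule `X` is a
derivation. -/
theorem jordanDerivation_isDerivation_of_symmetric_bimodule {A X : Type u} [NonUnitalNormedRing A] [NormedSpace ℂ A]
    [IsScalarTower ℂ A A] [SMulCommClass ℂ A A] [CompleteSpace A]
    [NormedAddCommGroup X] [NormedSpace ℂ X] [CompleteSpace X]
    (P : ProjTensorSquare (WithLp 1 (Unitization ℂ A))) (hP : P.SymmPseudoAmenable)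
    (M : BanachBimodule A X) (hsymm : ∀ (a : A) (x : X), M.lsmul a x = M.rsmul a x)
    (D : A →L[ℂ] X) (hD : M.IsJordanDerivation D) :
    M.IsDerivation D := by
  have hδ : M.jordanDefect D = 0 :=
    P.eq_zero_of_symmPseudoAmenable hP M.uLsmulCLM_one M.uLsmulCLM_mul
      (M.commute_uLsmulCLM hsymm) (M.jordanDefect_swap hsymm hD) (M.jordanDefect_mul_left hsymm D)
  intro a b
  have h := congr($hδ (WithLp.toLp 1 (a : Unitization ℂ A)) (WithLp.toLp 1 (b : Unitization ℂ A)))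
  rw [M.jordanDefect_apply_eq_snd, WithLp.ofLp_toLp, WithLp.ofLp_toLp, Unitization.snd_inr,
    Unitization.snd_inr, zero_apply, zero_apply, sub_sub, sub_eq_zero] at h
  rw [h, ← hsymm, add_comm]
end

section
/- Let 𝔘 be a Banach algebra with 𝔘♯ symmetrically pseudo-amenable, Y a Banach 𝔘-bimodule, and X a closed 𝔘-subbimodule of Y. If δ : 𝔘 → Y is a bounded derivation and τ : 𝔘 → Z_𝔘(Y) is linear with (δ + τ)(𝔘) ⊆ X, then δ(𝔘) ⊆ X and τ(𝔘) ⊆ Z_𝔘(X). -/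
open Filter Topology

universe u

set_option linter.unusedSectionVars false

section AuxLemmas

namespace ProjTensorSquare

variable {A : Type u} [NonUnitalNormedRing A] [NormedSpace ℂ A]
    [IsScalarTower ℂ A A] [SMulCommClass ℂ A A] [CompleteSpace A]

theorem mem_of_forall_tmul (P : ProjTensorSquare A) {Y : Type u} [NormedAddCommGroup Y]
    [NormedSpace ℂ Y] (f : P.T →L[ℂ] Y) (X : Submodule ℂ Y) (hXc : IsClosed (X : Set Y))
    (h : ∀ a b, f (P.tmul a b) ∈ X) (t : P.T) : f t ∈ X := by
  obtain ⟨u, v, -, hs, -⟩ := P.exists_rep t 1 one_pos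
  exact hXc.mem_of_tendsto (hs.mapL f).tendsto_sum_nat
    (Eventually.of_forall fun s => X.sum_mem fun n _ => h _ _)

theorem clm_ext (P : ProjTensorSquare A) {Y : Type u} [NormedAddCommGroup Y]
    [NormedSpace ℂ Y] {f g : P.T →L[ℂ] Y}
    (h : ∀ a b, f (P.tmul a b) = g (P.tmul a b)) (t : P.T) : f t = g t := by
  have := P.mem_of_forall_tmul (f - g) ⊥
    (by rw [Submodule.bot_coe]; exact isClosed_singleton)
    (fun a b => by simp [h a b]) t
  rw [Submodule.mem_bot] at this
  simpa [sub_eq_zero] using this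

end ProjTensorSquare

namespace BanachBimodule

variable {A Y : Type u} [NonUnitalNormedRing A] [NormedSpace ℂ A]
  [IsScalarTower ℂ A A] [SMulCommClass ℂ A A] [CompleteSpace A]
  [NormedAddCommGroup Y] [NormedSpace ℂ Y]

local notation "A♯" => WithLp 1 (Unitization ℂ A)

lemma norm_unitization_fst_le (p : A♯) : ‖(WithLp.equiv 1 (Unitization ℂ A) p).fst‖ ≤ ‖p‖ := by
  rw [WithLp.unitization_norm_def]
  exact le_add_of_nonneg_right (norm_nonneg _)

lemma norm_unitization_snd_le (p : A♯) : ‖(WithLp.equiv 1 (Unitization ℂ A) p).snd‖ ≤ ‖p‖ := by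
  rw [WithLp.unitization_norm_def]
  exact le_add_of_nonneg_left (norm_nonneg _)

/-- `M.uLsmul` as a continuous bilinear map. -/
noncomputable def uL (M : BanachBimodule A Y) : A♯ →L[ℂ] Y →L[ℂ] Y :=
  LinearMap.mkContinuous
    { toFun := fun p => (WithLp.equiv 1 (Unitization ℂ A) p).fst • ContinuousLinearMap.id ℂ Y
        + M.lsmul ((WithLp.equiv 1 (Unitization ℂ A) p).snd)
      map_add' := fun p q => by
        show ((WithLp.equiv 1 _ p).fst + (WithLp.equiv 1 _ q).fst) • _
            + M.lsmul ((WithLp.equiv 1 _ p).snd + (WithLp.equiv 1 _ q).snd) = _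
        rw [add_smul, map_add]; abel
      map_smul' := fun c p => by
        show (c * (WithLp.equiv 1 _ p).fst) • _ + M.lsmul (c • (WithLp.equiv 1 _ p).snd) = _
        rw [mul_smul, map_smul, RingHom.id_apply, smul_add] }
    (1 + ‖M.lsmul‖)
    (fun p => by
      refine (norm_add_le _ _).trans ?_
      have h1 : ‖(WithLp.equiv 1 (Unitization ℂ A) p).fst • ContinuousLinearMap.id ℂ Y‖
          ≤ ‖p‖ := by
        refine (norm_smul_le ((WithLp.equiv 1 (Unitization ℂ A) p).fst) (ContinuousLinearMap.id ℂ Y)).trans ?_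
        calc ‖(WithLp.equiv 1 (Unitization ℂ A) p).fst‖
              * ‖(ContinuousLinearMap.id ℂ Y : Y →L[ℂ] Y)‖
            ≤ ‖p‖ * 1 := mul_le_mul (norm_unitization_fst_le p)
              ContinuousLinearMap.norm_id_le (norm_nonneg _) (norm_nonneg _)
          _ = ‖p‖ := mul_one _
      have h2 : ‖M.lsmul ((WithLp.equiv 1 (Unitization ℂ A) p).snd)‖ ≤ ‖M.lsmul‖ * ‖p‖ :=
        (M.lsmul.le_opNorm _).trans (by
          exact mul_le_mul_of_nonneg_left (norm_unitization_snd_le p) (norm_nonneg _))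
      nlinarith [norm_nonneg p, norm_nonneg M.lsmul])

/-- `M.uRsmul` as a continuous bilinear map. -/
noncomputable def uR (M : BanachBimodule A Y) : A♯ →L[ℂ] Y →L[ℂ] Y :=
  LinearMap.mkContinuous
    { toFun := fun p => (WithLp.equiv 1 (Unitization ℂ A) p).fst • ContinuousLinearMap.id ℂ Y
        + M.rsmul ((WithLp.equiv 1 (Unitization ℂ A) p).snd)
      map_add' := fun p q => by
        show ((WithLp.equiv 1 _ p).fst + (WithLp.equiv 1 _ q).fst) • _
            + M.rsmul ((WithLp.equiv 1 _ p).snd + (WithLp.equiv 1 _ q).snd) = _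
        rw [add_smul, map_add]; abel
      map_smul' := fun c p => by
        show (c * (WithLp.equiv 1 _ p).fst) • _ + M.rsmul (c • (WithLp.equiv 1 _ p).snd) = _
        rw [mul_smul, map_smul, RingHom.id_apply, smul_add] }
    (1 + ‖M.rsmul‖)
    (fun p => by
      refine (norm_add_le _ _).trans ?_
      have h1 : ‖(WithLp.equiv 1 (Unitization ℂ A) p).fst • ContinuousLinearMap.id ℂ Y‖
          ≤ ‖p‖ := by
        refine (norm_smul_le ((WithLp.equiv 1 (Unitization ℂ A) p).fst) (ContinuousLinearMap.id ℂ Y)).trans ?_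
        calc ‖(WithLp.equiv 1 (Unitization ℂ A) p).fst‖
              * ‖(ContinuousLinearMap.id ℂ Y : Y →L[ℂ] Y)‖
            ≤ ‖p‖ * 1 := mul_le_mul (norm_unitization_fst_le p)
              ContinuousLinearMap.norm_id_le (norm_nonneg _) (norm_nonneg _)
          _ = ‖p‖ := mul_one _
      have h2 : ‖M.rsmul ((WithLp.equiv 1 (Unitization ℂ A) p).snd)‖ ≤ ‖M.rsmul‖ * ‖p‖ :=
        (M.rsmul.le_opNorm _).trans (by
          exact mul_le_mul_of_nonneg_left (norm_unitization_snd_le p) (norm_nonneg _))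
      nlinarith [norm_nonneg p, norm_nonneg M.rsmul])

variable (M : BanachBimodule A Y)

@[simp] lemma uL_apply (p : A♯) (y : Y) :
    M.uL p y = (WithLp.equiv 1 (Unitization ℂ A) p).fst • y
      + M.lsmul ((WithLp.equiv 1 (Unitization ℂ A) p).snd) y := rfl

@[simp] lemma uR_apply (p : A♯) (y : Y) :
    M.uR p y = (WithLp.equiv 1 (Unitization ℂ A) p).fst • y
      + M.rsmul ((WithLp.equiv 1 (Unitization ℂ A) p).snd) y := rfl

lemma uL_one (y : Y) : M.uL 1 y = y := by
  rw [uL_apply]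
  show (1 : ℂ) • y + M.lsmul 0 y = y
  simp

lemma uL_mul (p q : A♯) (y : Y) : M.uL (p * q) y = M.uL p (M.uL q y) := by
  have hmul : WithLp.equiv 1 (Unitization ℂ A) (p * q)
      = WithLp.equiv 1 _ p * WithLp.equiv 1 _ q := rfl
  rw [uL_apply, uL_apply, uL_apply, hmul, Unitization.fst_mul, Unitization.snd_mul]
  simp only [map_add, map_smul, ContinuousLinearMap.add_apply,
    ContinuousLinearMap.smul_apply, M.lsmul_mul]
  module

lemma uR_mul (p q : A♯) (y : Y) : M.uR (p * q) y = M.uR q (M.uR p y) := by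
  have hmul : WithLp.equiv 1 (Unitization ℂ A) (p * q)
      = WithLp.equiv 1 _ p * WithLp.equiv 1 _ q := rfl
  rw [uR_apply, uR_apply, uR_apply, hmul, Unitization.fst_mul, Unitization.snd_mul]
  simp only [map_add, map_smul, ContinuousLinearMap.add_apply,
    ContinuousLinearMap.smul_apply, M.rsmul_mul]
  module

lemma uL_mem (X : Submodule ℂ Y) (hXl : ∀ (a : A) (y : Y), y ∈ X → M.lsmul a y ∈ X)
    (p : A♯) {y : Y} (hy : y ∈ X) : M.uL p y ∈ X := by
  rw [uL_apply]
  exact X.add_mem (X.smul_mem _ hy) (hXl _ _ hy)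

/-- a bounded linear map `A♯ → Y` extending `δ` by `0`. -/
noncomputable def dsharp (δ : A →L[ℂ] Y) : A♯ →L[ℂ] Y :=
  LinearMap.mkContinuous
    { toFun := fun p => δ ((WithLp.equiv 1 (Unitization ℂ A) p).snd)
      map_add' := fun p q => by
        show δ ((WithLp.equiv 1 _ p).snd + (WithLp.equiv 1 _ q).snd) = _
        rw [map_add]
      map_smul' := fun c p => by
        show δ (c • (WithLp.equiv 1 _ p).snd) = _
        rw [map_smul, RingHom.id_apply] }
    ‖δ‖
    (fun p => (δ.le_opNorm _).trans
      (mul_le_mul_of_nonneg_left (norm_unitization_snd_le p) (norm_nonneg _)))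

@[simp] lemma dsharp_apply (δ : A →L[ℂ] Y) (p : A♯) :
    BanachBimodule.dsharp δ p = δ ((WithLp.equiv 1 (Unitization ℂ A) p).snd) := rfl

lemma dsharp_mul (δ : A →L[ℂ] Y) (hδ : M.IsDerivation δ) (p q : A♯) :
    BanachBimodule.dsharp δ (p * q) = M.uR q (BanachBimodule.dsharp δ p) + M.uL p (BanachBimodule.dsharp δ q) := by
  have hmul : WithLp.equiv 1 (Unitization ℂ A) (p * q)
      = WithLp.equiv 1 _ p * WithLp.equiv 1 _ q := rfl
  rw [dsharp_apply, hmul, Unitization.snd_mul]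
  simp only [map_add, map_smul]
  rw [hδ, uR_apply, uL_apply, dsharp_apply, dsharp_apply]
  module

end BanachBimodule

end AuxLemmas

set_option maxHeartbeats 1000000 in
/-- Let `𝔘` be a Banach algebra with `𝔘♯` symmetrically pseudo-amenable,
`Y` a Banach `𝔘`-bimodule, and `X` a closed `𝔘`-subbimodule of `Y`.  If `δ : 𝔘 → Y` is a
bounded derivation and `τ : 𝔘 → Z_𝔘(Y)` is linear with `(δ + τ)(𝔘) ⊆ X`, then
`δ(𝔘) ⊆ X` and `τ(𝔘) ⊆ Z_𝔘(X) = X ∩ Z_𝔘(Y)`. -/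
theorem derivation_add_central_into_submodule {A Y : Type u} [NonUnitalNormedRing A]
    [NormedSpace ℂ A] [IsScalarTower ℂ A A] [SMulCommClass ℂ A A] [CompleteSpace A]
    [NormedAddCommGroup Y] [NormedSpace ℂ Y] [CompleteSpace Y]
    (P : ProjTensorSquare (WithLp 1 (Unitization ℂ A))) (hP : P.SymmPseudoAmenable)
    (M : BanachBimodule A Y) (X : Submodule ℂ Y) (hXc : IsClosed (X : Set Y))
    (hXl : ∀ (a : A) (y : Y), y ∈ X → M.lsmul a y ∈ X)
    (hXr : ∀ (a : A) (y : Y), y ∈ X → M.rsmul a y ∈ X)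
    (δ : A →L[ℂ] Y) (hδ : M.IsDerivation δ)
    (τ : A →ₗ[ℂ] Y) (hτ : ∀ a, τ a ∈ M.center)
    (hsum : ∀ a, δ a + τ a ∈ X) :
    (∀ a, δ a ∈ X) ∧ ∀ a, τ a ∈ (X : Set Y) ∩ M.center := by
  classical
  obtain ⟨ι, l, t, hne, hflip, hcomm, happ⟩ := hP
  haveI := hne
  have hπ1 : Tendsto (fun i => P.π (t i)) l (𝓝 1) := by simpa using happ 1
  have hδX : ∀ e : A, δ e ∈ X := by
    intro e
    set c : WithLp 1 (Unitization ℂ A) :=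
      (WithLp.equiv 1 (Unitization ℂ A)).symm (e : Unitization ℂ A) with hc
    have hEc : WithLp.equiv 1 (Unitization ℂ A) c = (e : Unitization ℂ A) :=
      Equiv.apply_symm_apply _ _
    have hdc : BanachBimodule.dsharp δ c = δ e := by
      rw [BanachBimodule.dsharp_apply, hEc, Unitization.snd_inr]
    have central_mod : ∀ b : WithLp 1 (Unitization ℂ A),
        M.uR b (δ e) - M.uL b (δ e) ∈ X := by
      intro b
      have h0 : ∀ a : A, M.lsmul a (δ e) - M.rsmul a (δ e) ∈ X := by
        intro a
        have h1 : M.lsmul a (δ e + τ e) ∈ X := hXl _ _ (hsum e)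
        have h2 : M.rsmul a (δ e + τ e) ∈ X := hXr _ _ (hsum e)
        have h3 : M.lsmul a (τ e) = M.rsmul a (τ e) := hτ e a
        have h4 := X.sub_mem h1 h2
        rw [map_add, map_add, h3] at h4
        have h5 : M.lsmul a (δ e) + M.rsmul a (τ e) - (M.rsmul a (δ e) + M.rsmul a (τ e))
            = M.lsmul a (δ e) - M.rsmul a (δ e) := by abel
        rwa [h5] at h4
      rw [M.uR_apply, M.uL_apply]
      have h6 : (WithLp.equiv 1 (Unitization ℂ A) b).fst • δ e
            + M.rsmul ((WithLp.equiv 1 (Unitization ℂ A) b).snd) (δ e)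
          - ((WithLp.equiv 1 (Unitization ℂ A) b).fst • δ e
            + M.lsmul ((WithLp.equiv 1 (Unitization ℂ A) b).snd) (δ e))
          = -(M.lsmul ((WithLp.equiv 1 (Unitization ℂ A) b).snd) (δ e)
            - M.rsmul ((WithLp.equiv 1 (Unitization ℂ A) b).snd) (δ e)) := by abel
      rw [h6]
      exact X.neg_mem (h0 _)
    obtain ⟨g₁, hg₁, -⟩ := P.lift
      (((ContinuousLinearMap.compL ℂ (WithLp 1 (Unitization ℂ A)) Y Y).flip
        (BanachBimodule.dsharp δ)).comp M.uL)
    obtain ⟨W, hW, -⟩ := P.lift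
      (((ContinuousLinearMap.compL ℂ (WithLp 1 (Unitization ℂ A)) Y Y).flip
        (M.uR.flip (δ e))).comp M.uL)
    have hg₁' : ∀ a b, g₁ (P.tmul a b) = M.uL a (BanachBimodule.dsharp δ b) := by
      intro a b
      rw [hg₁]
      simp only [ContinuousLinearMap.comp_apply, ContinuousLinearMap.flip_apply,
        ContinuousLinearMap.compL_apply]
    have hW' : ∀ a b, W (P.tmul a b) = M.uL a (M.uR b (δ e)) := by
      intro a b
      rw [hW]
      simp only [ContinuousLinearMap.comp_apply, ContinuousLinearMap.flip_apply,
        ContinuousLinearMap.compL_apply]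
    have hA : ∀ s, g₁ (P.lcirc c s) = W s + g₁ (P.rcirc c s) := by
      intro s
      have key := P.clm_ext (f := g₁.comp (P.lcirc c)) (g := W + g₁.comp (P.rcirc c))
        (fun a b => by
          simp only [ContinuousLinearMap.comp_apply, ContinuousLinearMap.add_apply]
          rw [P.lcirc_tmul, P.rcirc_tmul, hg₁', hg₁', hW',
            M.dsharp_mul δ hδ c b, map_add, hdc, M.uL_mul]) s
      simpa using key
    have hC1 := P.clm_ext (f := P.flip.comp (P.lmul c)) (g := (P.lcirc c).comp P.flip)
      (fun a b => by
        simp only [ContinuousLinearMap.comp_apply]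
        rw [P.lmul_tmul, P.flip_tmul, P.flip_tmul, P.lcirc_tmul])
    have hC2 := P.clm_ext (f := P.flip.comp (P.rmul c)) (g := (P.rcirc c).comp P.flip)
      (fun a b => by
        simp only [ContinuousLinearMap.comp_apply]
        rw [P.rmul_tmul, P.flip_tmul, P.flip_tmul, P.rcirc_tmul])
    have hBmem : ∀ s, W s - M.uL (P.π s) (δ e) ∈ X := by
      intro s
      have key := P.mem_of_forall_tmul (W - ((M.uL.flip (δ e)).comp P.π)) X hXc
        (fun a b => by
          simp only [ContinuousLinearMap.sub_apply, ContinuousLinearMap.comp_apply,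
            ContinuousLinearMap.flip_apply]
          rw [P.π_tmul, hW', M.uL_mul, ← map_sub]
          exact M.uL_mem X hXl a (central_mod b)) s
      simpa using key
    have h1 : Tendsto (fun i => M.uL (P.π (t i)) (δ e)) l (𝓝 (δ e)) := by
      have hcont := ((M.uL.flip (δ e)).continuous.tendsto 1).comp hπ1
      simpa [Function.comp_def, M.uL_one] using hcont
    have h2 : Tendsto (fun i => W (t i)) l (𝓝 0) := by
      have key : ∀ i, W (t i) = (g₁.comp P.flip) (P.lmul c (t i) - P.rmul c (t i)) := by
        intro i
        have e1 : P.lcirc c (t i) = P.flip (P.lmul c (t i)) := by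
          have h := hC1 (t i)
          simp only [ContinuousLinearMap.comp_apply] at h
          rw [h, hflip i]
        have e2 : P.rcirc c (t i) = P.flip (P.rmul c (t i)) := by
          have h := hC2 (t i)
          simp only [ContinuousLinearMap.comp_apply] at h
          rw [h, hflip i]
        have e3 : W (t i) = g₁ (P.lcirc c (t i)) - g₁ (P.rcirc c (t i)) := by
          rw [hA (t i)]; abel
        rw [e3, e1, e2]
        simp only [ContinuousLinearMap.comp_apply, map_sub]
      rw [tendsto_congr key]
      have := ((g₁.comp P.flip).continuous.tendsto 0).comp (hcomm c)
      simpa [Function.comp_def] using this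
    have h3 : Tendsto (fun i => M.uL (P.π (t i)) (δ e) - W (t i)) l (𝓝 (δ e)) := by
      simpa using h1.sub h2
    refine hXc.mem_of_tendsto h3 (Eventually.of_forall fun i => ?_)
    have := X.neg_mem (hBmem (t i))
    simpa [neg_sub] using this
  refine ⟨hδX, fun a => ⟨?_, hτ a⟩⟩
  have h7 : τ a = (δ a + τ a) - δ a := by abel
  show τ a ∈ X
  rw [h7]
  exact X.sub_mem (hsum a) (hδX a)
end
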